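/- Let E : x =_η f(x) be a system of m fixpoint equations over a complete lattice L and let u be a compatible tuple of up-to functions for E. Define the system Ê^u of 2m equations over L in the variables (y_1,…,y_m, x_1,…,x_m): for i = 1,…,m, equation i is y_i =_μ u_i(y_i) ⊔ x_i, and equation m+i is x_i =_{η_i} f_i(y_1,…,y_m). Then the solution of Ê^u is (sol(E), sol(E)), i.e., both the y-components and the x-components of the solution of Ê^u equal the solution of E. -/

import Mathlib

/-- Least fixpoint of `f` (Knaster–Tarski construction). -/
def muFix {L : Type*} [CompleteLattice L] (f : L → L) : L := sInf {x | f x ≤ x}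

/-- Greatest fixpoint of `f` (Knaster–Tarski construction). -/
def nuFix {L : Type*} [CompleteLattice L] (f : L → L) : L := sSup {x | x ≤ f x}
/-- `g` is (directed-)continuous: it preserves joins of (nonempty) directed sets. -/
def DirContinuous {L M : Type*} [CompleteLattice L] [CompleteLattice M] (g : L → M) : Prop :=
  ∀ S : Set L, S.Nonempty → DirectedOn (· ≤ ·) S → g (sSup S) = sSup (g '' S)

/-- `g` is strict: it maps bottom to bottom. -/
def BotStrict {L M : Type*} [CompleteLattice L] [CompleteLattice M] (g : L → M) : Prop :=
  g ⊥ = ⊥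

/-- `g` is co-continuous: it preserves meets of (nonempty) codirected sets. -/
def CodirContinuous {L M : Type*} [CompleteLattice L] [CompleteLattice M] (g : L → M) : Prop :=
  ∀ S : Set L, S.Nonempty → DirectedOn (· ≥ ·) S → g (sInf S) = sInf (g '' S)

/-- `g` is co-strict: it maps top to top. -/
def TopStrict {L M : Type*} [CompleteLattice L] [CompleteLattice M] (g : L → M) : Prop :=
  g ⊤ = ⊤
/-- Marker of a fixpoint equation: least (`mu`) or greatest (`nu`) fixpoint. -/
inductive EqMarker : Type
  | mu
  | nu

/-- Solution of a system of `m` fixpoint equations `x =_η f(x)` over a complete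
lattice `L`, defined by recursion on `m`: the last variable is treated as a
parameter, the first `m-1` equations are solved recursively, the resulting
one-variable equation is solved by taking the least or greatest fixpoint
according to the marker of the last equation, and the value is substituted
back. -/
def eqSol {L : Type*} [CompleteLattice L] :
    (m : ℕ) → ((Fin m → L) → Fin m → L) → (Fin m → EqMarker) → (Fin m → L)
  | 0, _, _ => fun i => i.elim0
  | m + 1, f, η =>
    let solPrev : L → Fin m → L := fun x =>
      eqSol m (fun v j => f (Fin.snoc v x) j.castSucc) (fun j => η j.castSucc)
    let g : L → L := fun x => f (Fin.snoc (solPrev x) x) (Fin.last m)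
    let slast : L :=
      match η (Fin.last m) with
      | EqMarker.mu => muFix g
      | EqMarker.nu => nuFix g
    Fin.snoc (solPrev slast) slast

/-- The tuple of functions of the `2m`-equation system `Ê^u` in the variables
`(y_1,…,y_m,x_1,…,x_m)`: equation `i` (for `i < m`) is
`y_i =_μ u_i(y_i) ⊔ x_i` and equation `m+i` is `x_i =_{η_i} f_i(y_1,…,y_m)`. -/
def upToSystemFun {L : Type*} [CompleteLattice L] (m : ℕ)
    (f : (Fin m → L) → Fin m → L) (u : Fin m → L → L) :
    (Fin (m + m) → L) → Fin (m + m) → L :=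
  fun v => Fin.addCases
    (fun i => u i (v (Fin.castAdd m i)) ⊔ v (Fin.natAdd m i))
    (fun i => f (fun k => v (Fin.castAdd m k)) i)

/-- Markers of the system `Ê^u`: `μ` for the `y`-equations, `η_i` for the
`x`-equations. -/
def upToSystemMarkers (m : ℕ) (η : Fin m → EqMarker) : Fin (m + m) → EqMarker :=
  Fin.addCases (fun _ => EqMarker.mu) η

section Helpers
variable {L : Type*} [CompleteLattice L]

theorem muFix_le {f : L → L} {a : L} (h : f a ≤ a) : muFix f ≤ a := sInf_le h
theorem le_muFix {f : L → L} {a : L} (h : ∀ b, f b ≤ b → a ≤ b) : a ≤ muFix f :=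
  le_sInf fun b hb => h b hb
theorem le_nuFix {f : L → L} {a : L} (h : a ≤ f a) : a ≤ nuFix f := le_sSup h
theorem nuFix_le {f : L → L} {a : L} (h : ∀ b, b ≤ f b → b ≤ a) : nuFix f ≤ a :=
  sSup_le fun b hb => h b hb

theorem muFix_eq_lfp {f : L → L} (hf : Monotone f) : muFix f = OrderHom.lfp ⟨f, hf⟩ := rfl
theorem nuFix_eq_gfp {f : L → L} (hf : Monotone f) : nuFix f = OrderHom.gfp ⟨f, hf⟩ := rfl

theorem muFix_fixed {f : L → L} (hf : Monotone f) : f (muFix f) = muFix f :=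
  OrderHom.map_lfp (⟨f, hf⟩ : L →o L)
theorem nuFix_fixed {f : L → L} (hf : Monotone f) : f (nuFix f) = nuFix f :=
  OrderHom.map_gfp (⟨f, hf⟩ : L →o L)

theorem muFix_mono {f g : L → L} (h : ∀ x, f x ≤ g x) : muFix f ≤ muFix g :=
  le_muFix fun b hb => muFix_le ((h b).trans hb)
theorem nuFix_mono {f g : L → L} (h : ∀ x, f x ≤ g x) : nuFix f ≤ nuFix g :=
  nuFix_le fun b hb => le_nuFix (hb.trans (h b))

theorem oneD_nu {h c : L → L} (hh : Monotone h) (hc : Monotone c)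
    (hext : ∀ x, x ≤ c x) (hidem : ∀ x, c (c x) = c x)
    (hcompat : ∀ x, c (h x) ≤ h (c x)) :
    nuFix (fun z => h (c z)) = nuFix h ∧ c (nuFix h) = nuFix h := by
  have hm : Monotone (fun z => h (c z)) := fun a b hab => hh (hc hab)
  have hfix : h (c (nuFix (fun z => h (c z)))) = nuFix (fun z => h (c z)) := nuFix_fixed hm
  set t := nuFix (fun z => h (c z)) with ht
  have hct : c t = t := by
    refine le_antisymm ?_ (hext t)
    calc c t = c (h (c t)) := by rw [hfix]
      _ ≤ h (c (c t)) := hcompat _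
      _ = h (c t) := by rw [hidem]
      _ = t := hfix
  have h1 : t ≤ nuFix h := le_nuFix (by conv_lhs => rw [← hfix, hct])
  have h2 : nuFix h ≤ t := nuFix_mono fun x => hh (hext x)
  have heq : t = nuFix h := le_antisymm h1 h2
  exact ⟨heq, by rw [← heq, hct]⟩

theorem oneD_mu {h c : L → L} (hh : Monotone h) (hc : Monotone c)
    (hext : ∀ x, x ≤ c x) (hidem : ∀ x, c (c x) = c x)
    (hcompat : ∀ x, c (h x) ≤ h (c x)) (hcont : DirContinuous c) (hstrict : BotStrict c) :
    muFix (fun z => h (c z)) = muFix h ∧ c (muFix h) = muFix h := by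
  have hm : Monotone (fun z => h (c z)) := fun a b hab => hh (hc hab)
  set F : L →o L := ⟨fun z => h (c z), hm⟩ with hF
  have key : ∀ a : Ordinal, c (OrdinalApprox.lfpApprox F ⊥ a) ≤ muFix h := by
    intro a
    induction a using Ordinal.induction with
    | h a ih =>
      rw [OrdinalApprox.lfpApprox]
      set S : Set L := {x | ∃ b, ∃ _ : b < a, F (OrdinalApprox.lfpApprox F ⊥ b) = x} ∪ {⊥} with hS
      have hne : S.Nonempty := ⟨⊥, Or.inr rfl⟩
      have hchain : IsChain (· ≤ ·) S := by
        rintro x (⟨b, hb, rfl⟩ | rfl) y (⟨b', hb', rfl⟩ | rfl) hxy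
        · rcases le_total b b' with hbb | hbb
          · exact Or.inl (F.monotone (OrdinalApprox.lfpApprox_monotone F hbb))
          · exact Or.inr (F.monotone (OrdinalApprox.lfpApprox_monotone F hbb))
        · exact Or.inr bot_le
        · exact Or.inl bot_le
        · exact Or.inl le_rfl
      have hSeq : (⊥ ⊔ ⨆ b, ⨆ (_ : b < a), F (OrdinalApprox.lfpApprox F ⊥ b)) = sSup S := by
        apply le_antisymm
        · exact sup_le bot_le (iSup₂_le fun b hb => le_sSup (Or.inl ⟨b, hb, rfl⟩))
        · refine sSup_le ?_
          rintro x (⟨b, hb, rfl⟩ | rfl)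
          · exact le_sup_of_le_right (le_iSup₂_of_le b hb le_rfl)
          · exact bot_le
      rw [hSeq, hcont S hne hchain.directedOn]
      apply sSup_le
      rintro x ⟨y, hy, rfl⟩
      rcases hy with ⟨b, hb, rfl⟩ | rfl
      · calc c (F (OrdinalApprox.lfpApprox F ⊥ b))
            ≤ h (c (c (OrdinalApprox.lfpApprox F ⊥ b))) := hcompat _
          _ = h (c (OrdinalApprox.lfpApprox F ⊥ b)) := by rw [hidem]
          _ ≤ h (muFix h) := hh (ih b hb)
          _ ≤ muFix h := le_of_eq (muFix_fixed hh)
      · rw [hstrict]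
        exact bot_le
  have hlfp : muFix (fun z => h (c z)) = OrdinalApprox.lfpApprox F ⊥ (Cardinal.ord (Order.succ (Cardinal.mk L))) :=
    (OrdinalApprox.lfpApprox_ord_eq_lfp F).symm
  have h1 : muFix (fun z => h (c z)) ≤ muFix h := by
    rw [hlfp]
    exact (hext _).trans (key _)
  have h2 : muFix h ≤ muFix (fun z => h (c z)) := muFix_mono fun x => hh (hext x)
  have heq : muFix (fun z => h (c z)) = muFix h := le_antisymm h1 h2
  have h3 : c (muFix (fun z => h (c z))) ≤ muFix h := by
    conv_lhs => rw [hlfp]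
    exact key _
  exact ⟨heq, le_antisymm (heq ▸ h3) (hext _)⟩

end Helpers
section EqSolLemmas
variable {L : Type*} [CompleteLattice L]

/-- The subsystem of the first `m` equations with the last variable fixed to `z`. -/
def subSys {m : ℕ} (f : (Fin (m + 1) → L) → Fin (m + 1) → L) (z : L) :
    (Fin m → L) → Fin m → L :=
  fun v j => f (Fin.snoc v z) j.castSucc

/-- The markers of the first `m` equations. -/
def subMk {m : ℕ} (η : Fin (m + 1) → EqMarker) : Fin m → EqMarker :=
  fun j => η j.castSucc

/-- The one-variable function solved by the last equation. -/
def lastFun {m : ℕ} (f : (Fin (m + 1) → L) → Fin (m + 1) → L)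
    (η : Fin (m + 1) → EqMarker) : L → L :=
  fun z => f (Fin.snoc (eqSol m (subSys f z) (subMk η)) z) (Fin.last m)

/-- The last component of the solution. -/
def lastSol {m : ℕ} (f : (Fin (m + 1) → L) → Fin (m + 1) → L)
    (η : Fin (m + 1) → EqMarker) : L :=
  match η (Fin.last m) with
  | EqMarker.mu => muFix (lastFun f η)
  | EqMarker.nu => nuFix (lastFun f η)

theorem eqSol_succ {m : ℕ} (f : (Fin (m + 1) → L) → Fin (m + 1) → L)
    (η : Fin (m + 1) → EqMarker) :
    eqSol (m + 1) f η =
      Fin.snoc (eqSol m (subSys f (lastSol f η)) (subMk η)) (lastSol f η) := rfl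

theorem snoc_mono {m : ℕ} {v w : Fin m → L} {z z' : L} (h : v ≤ w) (hz : z ≤ z') :
    (Fin.snoc v z : Fin (m + 1) → L) ≤ Fin.snoc w z' := by
  intro i
  induction i using Fin.lastCases with
  | last => simpa using hz
  | cast j => simpa using h j

theorem subSys_monotone {m : ℕ} {f : (Fin (m + 1) → L) → Fin (m + 1) → L}
    (hf : Monotone f) (z : L) : Monotone (subSys f z) :=
  fun v w hvw j => hf (snoc_mono hvw le_rfl) _

theorem eqSol_mono {L : Type*} [CompleteLattice L] :
    ∀ (m : ℕ) (f g : (Fin m → L) → Fin m → L), Monotone f →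
      (∀ v i, f v i ≤ g v i) → ∀ (η : Fin m → EqMarker) (i : Fin m),
      eqSol m f η i ≤ eqSol m g η i := by
  intro m
  induction m with
  | zero => intro f g hf hfg η i; exact i.elim0
  | succ m IH =>
    intro f g hf hfg η
    have hsub : ∀ z z' : L, z ≤ z' → ∀ (j : Fin m),
        eqSol m (subSys f z) (subMk η) j ≤ eqSol m (subSys g z') (subMk η) j := by
      intro z z' hzz j
      refine le_trans (IH (subSys f z) (subSys f z') (subSys_monotone hf z)
        (fun v i => hf (snoc_mono le_rfl hzz) _) (subMk η) j) ?_
      exact IH (subSys f z') (subSys g z') (subSys_monotone hf z')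
        (fun v i => hfg _ _) (subMk η) j
    have hlastFun : ∀ z z' : L, z ≤ z' → lastFun f η z ≤ lastFun g η z' := by
      intro z z' hzz
      refine le_trans (hf (a := Fin.snoc (eqSol m (subSys f z) (subMk η)) z) (snoc_mono (fun j => hsub z z' hzz j) hzz) (Fin.last m)) (hfg _ _)
    have hlast : lastSol f η ≤ lastSol g η := by
      unfold lastSol
      cases η (Fin.last m) with
      | mu => exact muFix_mono fun z => hlastFun z z le_rfl
      | nu => exact nuFix_mono fun z => hlastFun z z le_rfl
    intro i
    rw [eqSol_succ, eqSol_succ]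
    induction i using Fin.lastCases with
    | last => simpa using hlast
    | cast j => simpa using hsub _ _ hlast j

/-- Systems whose equations are independent are solved pointwise. -/
theorem eqSol_indep {L : Type*} [CompleteLattice L] :
    ∀ (m : ℕ) (g : Fin m → L → L), (∀ i, Monotone (g i)) →
      ∀ (η : Fin m → EqMarker) (i : Fin m),
      eqSol m (fun v i => g i (v i)) η i =
        (match η i with
         | EqMarker.mu => muFix (g i)
         | EqMarker.nu => nuFix (g i)) := by
  intro m
  induction m with
  | zero => intro g hg η i; exact i.elim0
  | succ m IH =>
    intro g hg η i
    have hsub : ∀ z : L, subSys (fun v i => g i (v i)) z =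
        fun (v : Fin m → L) j => g j.castSucc (v j) := by
      intro z; funext v j
      simp [subSys]
    have hlastFun : lastFun (fun v i => g i (v i)) η = g (Fin.last m) := by
      funext z
      simp [lastFun]
    rw [eqSol_succ]
    induction i using Fin.lastCases with
    | last =>
      rw [Fin.snoc_last]
      unfold lastSol
      rw [hlastFun]
    | cast j =>
      rw [Fin.snoc_castSucc, hsub]
      exact IH (fun j => g j.castSucc) (fun j => hg _) (subMk η) j

end EqSolLemmas
section CoreLemma
variable {L : Type*} [CompleteLattice L]

theorem piSnoc {m : ℕ} (c : Fin (m + 1) → L → L) (v : Fin m → L) (z : L) :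
    (fun i => c i ((Fin.snoc v z : Fin (m+1) → L) i)) =
      (Fin.snoc (fun j => c j.castSucc (v j)) (c (Fin.last m) z) : Fin (m + 1) → L) := by
  funext i
  induction i using Fin.lastCases with
  | last => simp
  | cast j => simp

theorem sol_comp_closure {L : Type*} [CompleteLattice L] :
    ∀ (m : ℕ) (f : (Fin m → L) → Fin m → L), Monotone f →
    ∀ (η : Fin m → EqMarker) (c : Fin m → L → L),
      (∀ i, Monotone (c i)) →
      (∀ i x, x ≤ c i x) →
      (∀ i x, c i (c i x) = c i x) →
      (∀ v i, c i (f v i) ≤ f (fun j => c j (v j)) i) →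
      (∀ i, η i = EqMarker.mu → DirContinuous (c i) ∧ BotStrict (c i)) →
      (∀ i, eqSol m (fun v => f (fun j => c j (v j))) η i = eqSol m f η i) ∧
      (∀ i, c i (eqSol m f η i) = eqSol m f η i) := by
  intro m
  induction m with
  | zero => intro f hf η c _ _ _ _ _; exact ⟨fun i => i.elim0, fun i => i.elim0⟩
  | succ m IH =>
    intro f hf η c hc hext hidem hcompat hμ
    set g : (Fin (m + 1) → L) → Fin (m + 1) → L := fun v => f (fun j => c j (v j)) with hg
    have hgmono : Monotone g := fun v w hvw => hf (fun j => hc j (hvw j))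
    set c' : Fin m → L → L := fun j => c j.castSucc with hc'
    set cm : L → L := c (Fin.last m) with hcm
    -- the parametrized base system and its solution
    set P : L → Fin m → L := fun z => eqSol m (subSys f z) (subMk η) with hP
    -- key rewriting of the subsystem of g
    have hsubg : ∀ z : L, subSys g z =
        fun v j => (subSys f (cm z)) (fun j' => c' j' (v j')) j := by
      intro z; funext v j
      show f (fun i => c i ((Fin.snoc v z : Fin (m+1) → L) i)) j.castSucc = _
      rw [piSnoc]
      rfl
    -- IH applies to `subSys f w` whenever `cm w = w`
    have hIH : ∀ w : L, cm w = w →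
        (∀ j, eqSol m (fun v => (subSys f w) (fun j' => c' j' (v j'))) (subMk η) j
            = eqSol m (subSys f w) (subMk η) j) ∧
        (∀ j, c' j (eqSol m (subSys f w) (subMk η) j) = eqSol m (subSys f w) (subMk η) j) := by
      intro w hw
      refine IH (subSys f w) (subSys_monotone hf w) (subMk η) c'
        (fun j => hc _) (fun j => hext _) (fun j => hidem _) ?_ (fun j hj => hμ _ hj)
      intro v j
      calc c' j (subSys f w v j) = c j.castSucc (f (Fin.snoc v w) j.castSucc) := rfl
        _ ≤ f (fun i => c i ((Fin.snoc v w : Fin (m+1) → L) i)) j.castSucc := hcompat _ _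
        _ = f (Fin.snoc (fun j' => c' j' (v j')) (cm w)) j.castSucc := by rw [piSnoc]
        _ = subSys f w (fun j' => c' j' (v j')) j := by rw [hw]; rfl
    -- Q z = P (cm z), and c' fixes it
    have hcmfix : ∀ z : L, cm (cm z) = cm z := fun z => hidem _ _
    have hQ : ∀ z : L, ∀ j, eqSol m (subSys g z) (subMk η) j = P (cm z) j := by
      intro z j
      rw [hsubg z]
      exact (hIH (cm z) (hcmfix z)).1 j
    have hPfix : ∀ z : L, ∀ j, c' j (P (cm z) j) = P (cm z) j :=
      fun z => (hIH (cm z) (hcmfix z)).2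
    -- P is monotone
    have hPmono : ∀ z z' : L, z ≤ z' → ∀ j, P z j ≤ P z' j := by
      intro z z' hzz j
      exact eqSol_mono m (subSys f z) (subSys f z') (subSys_monotone hf z)
        (fun v i => hf (snoc_mono le_rfl hzz) _) (subMk η) j
    -- lastFun g = lastFun f ∘ cm
    have hlastg : lastFun g η = fun z => lastFun f η (cm z) := by
      funext z
      show f (fun i => c i ((Fin.snoc (eqSol m (subSys g z) (subMk η)) z : Fin (m+1) → L) i)) (Fin.last m) = _
      rw [piSnoc]
      have h1 : (fun j => c' j (eqSol m (subSys g z) (subMk η) j)) = P (cm z) := by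
        funext j
        rw [hQ z j]
        exact hPfix z j
      rw [h1]
      rfl
    -- compatibility of cm with lastFun f
    have hLmono : Monotone (lastFun f η) := by
      intro z z' hzz
      exact hf (snoc_mono (fun j => hPmono z z' hzz j) hzz) _
    have hLcompat : ∀ z, cm (lastFun f η z) ≤ lastFun f η (cm z) := by
      intro z
      calc cm (lastFun f η z) = c (Fin.last m) (f (Fin.snoc (P z) z) (Fin.last m)) := rfl
        _ ≤ f (fun i => c i ((Fin.snoc (P z) z : Fin (m+1) → L) i)) (Fin.last m) := hcompat _ _
        _ = f (Fin.snoc (fun j => c' j (P z j)) (cm z)) (Fin.last m) := by rw [piSnoc]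
        _ ≤ f (Fin.snoc (P (cm z)) (cm z)) (Fin.last m) := by
              refine hf (snoc_mono (fun j => ?_) le_rfl) _
              calc c' j (P z j) ≤ c' j (P (cm z) j) := hc _ (hPmono z (cm z) (hext _ z) j)
                _ = P (cm z) j := hPfix z j
        _ = lastFun f η (cm z) := rfl
    -- the one-dimensional lemma
    have hone : lastSol g η = lastSol f η ∧ cm (lastSol f η) = lastSol f η := by
      unfold lastSol
      rw [hlastg]
      rcases hη : η (Fin.last m) with _ | _
      · obtain ⟨hcont, hstrict⟩ := hμ (Fin.last m) hη
        exact oneD_mu hLmono (hc _) (hext _) (hidem _) hLcompat hcont hstrict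
      · exact oneD_nu hLmono (hc _) (hext _) (hidem _) hLcompat
    set s := lastSol f η with hs
    constructor
    · intro i
      rw [eqSol_succ, eqSol_succ, hone.1]
      induction i using Fin.lastCases with
      | last => simp [hs]
      | cast j =>
        rw [Fin.snoc_castSucc, Fin.snoc_castSucc, hQ s j, hone.2]
    · intro i
      rw [eqSol_succ]
      induction i using Fin.lastCases with
      | last =>
        rw [Fin.snoc_last]
        exact hone.2
      | cast j =>
        rw [Fin.snoc_castSucc]
        have := hPfix s j
        rwa [hone.2] at this
end CoreLemma
section HatU
variable {L : Type*} [CompleteLattice L]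

/-- The least closure above `x` compatible with `u`: `μ y. u(y) ⊔ x`. -/
def hatU (u : L → L) (x : L) : L := muFix (fun y => u y ⊔ x)

/-- The Kleene iterates of `hatU`. -/
def hatIter (u : L → L) : ℕ → L → L
  | 0 => fun x => x
  | n + 1 => fun x => u (hatIter u n x) ⊔ x

variable {u : L → L} (hu : Monotone u)
include hu

theorem hatU_body_mono (x : L) : Monotone (fun y => u y ⊔ x) :=
  fun a b hab => sup_le_sup_right (hu hab) x

theorem hatU_fixed (x : L) : u (hatU u x) ⊔ x = hatU u x :=
  muFix_fixed (hatU_body_mono hu x)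

theorem hatU_ext (x : L) : x ≤ hatU u x :=
  le_sup_right.trans (le_of_eq (hatU_fixed hu x))

theorem u_hatU_le (x : L) : u (hatU u x) ≤ hatU u x :=
  le_sup_left.trans (le_of_eq (hatU_fixed hu x))

theorem hatU_mono : Monotone (hatU u) :=
  fun a b hab => muFix_mono fun y => sup_le_sup_left hab (u y)

theorem hatU_idem (x : L) : hatU u (hatU u x) = hatU u x := by
  refine le_antisymm (muFix_le ?_) (hatU_ext hu _)
  exact sup_le (u_hatU_le hu x) le_rfl

theorem hatU_strict (hstrict : BotStrict u) : BotStrict (hatU u) := by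
  refine le_antisymm (muFix_le ?_) bot_le
  rw [hstrict]
  simp

theorem hatIter_mono (n : ℕ) : Monotone (hatIter u n) := by
  induction n with
  | zero => exact monotone_id
  | succ n ih => exact fun a b hab => sup_le_sup (hu (ih hab)) hab

theorem hatIter_le_succ (n : ℕ) (x : L) : hatIter u n x ≤ hatIter u (n + 1) x := by
  induction n with
  | zero => exact le_sup_right
  | succ n ih => exact sup_le_sup_right (hu ih) x

theorem hatIter_mono_nat (x : L) : Monotone (fun n => hatIter u n x) :=
  monotone_nat_of_le_succ fun n => hatIter_le_succ hu n x

theorem hatIter_le_hatU (n : ℕ) (x : L) : hatIter u n x ≤ hatU u x := by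
  induction n with
  | zero => exact hatU_ext hu x
  | succ n ih =>
    calc u (hatIter u n x) ⊔ x ≤ u (hatU u x) ⊔ x := sup_le_sup_right (hu ih) x
      _ = hatU u x := hatU_fixed hu x

theorem hatU_eq_iSup (hcont : DirContinuous u) (x : L) :
    hatU u x = ⨆ n, hatIter u n x := by
  refine le_antisymm (muFix_le ?_) (iSup_le fun n => hatIter_le_hatU hu n x)
  have hrange : Set.range (fun n => hatIter u n x) = (fun n => hatIter u n x) '' Set.univ := by
    rw [Set.image_univ]
  have hdir : DirectedOn (· ≤ ·) (Set.range fun n => hatIter u n x) :=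
    directedOn_range.mpr ((hatIter_mono_nat hu x).directed_le)
  have hne : (Set.range fun n => hatIter u n x).Nonempty := Set.range_nonempty _
  have h1 : u (⨆ n, hatIter u n x) = ⨆ n, u (hatIter u n x) := by
    rw [iSup, hcont _ hne hdir, ← Set.range_comp]
    rfl
  rw [h1]
  refine sup_le (iSup_le fun n => ?_) (le_iSup_of_le 0 le_rfl)
  exact le_iSup_of_le (n + 1) le_sup_left

theorem hatIter_cont (hcont : DirContinuous u) (n : ℕ) : DirContinuous (hatIter u n) := by
  induction n with
  | zero => intro S hne hdir; simp [hatIter, Set.image_id']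
  | succ n ih =>
    intro S hne hdir
    have hne' : (hatIter u n '' S).Nonempty := hne.image _
    have hdir' : DirectedOn (· ≤ ·) (hatIter u n '' S) := by
      rintro _ ⟨a, ha, rfl⟩ _ ⟨b, hb, rfl⟩
      obtain ⟨z, hz, haz, hbz⟩ := hdir a ha b hb
      exact ⟨_, ⟨z, hz, rfl⟩, hatIter_mono hu n haz, hatIter_mono hu n hbz⟩
    show u (hatIter u n (sSup S)) ⊔ sSup S = _
    rw [ih S hne hdir, hcont _ hne' hdir']
    apply le_antisymm
    · refine sup_le (sSup_le ?_) (sSup_le ?_)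
      · rintro y ⟨y', ⟨s, hs, rfl⟩, rfl⟩
        refine le_sSup_of_le ⟨s, hs, rfl⟩ le_sup_left
      · intro s hs
        exact le_sSup_of_le ⟨s, hs, rfl⟩ le_sup_right
    · refine sSup_le ?_
      rintro y ⟨s, hs, rfl⟩
      refine sup_le ?_ ?_
      · exact le_sup_of_le_left (le_sSup ⟨hatIter u n s, ⟨s, hs, rfl⟩, rfl⟩)
      · exact le_sup_of_le_right (le_sSup hs)

theorem hatU_cont (hcont : DirContinuous u) : DirContinuous (hatU u) := by
  intro S hne hdir
  rw [hatU_eq_iSup hu hcont]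
  have h1 : ∀ n, hatIter u n (sSup S) = ⨆ s ∈ S, hatIter u n s := by
    intro n
    rw [hatIter_cont hu hcont n S hne hdir, sSup_image]
  calc (⨆ n, hatIter u n (sSup S)) = ⨆ n, ⨆ s ∈ S, hatIter u n s := by simp only [h1]
    _ = ⨆ s ∈ S, ⨆ n, hatIter u n s := by rw [iSup_comm]; exact iSup_congr fun s => iSup_comm
    _ = ⨆ s ∈ S, hatU u s := by
        refine iSup_congr fun s => iSup_congr fun _ => ?_
        rw [hatU_eq_iSup hu hcont]
    _ = sSup (hatU u '' S) := by rw [sSup_image]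

end HatU
section Structural
variable {L : Type*} [CompleteLattice L]

/-- The parametrized side value of a `y`-equation. -/
def sideVal (m k : ℕ) (p : Fin m → L) (v : Fin (m + k) → L) (i : Fin m) : L :=
  if h : (i : ℕ) < k then v (Fin.natAdd m ⟨i, h⟩) else p i

/-- The combined system with `m` `y`-equations and `k` `x`-equations. -/
def bigF (m k : ℕ) (hk : k ≤ m) (f : (Fin m → L) → Fin m → L) (u : Fin m → L → L)
    (p : Fin m → L) : (Fin (m + k) → L) → Fin (m + k) → L :=
  fun v => Fin.addCases
    (fun i => u i (v (Fin.castAdd k i)) ⊔ sideVal m k p v i)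
    (fun j => f (fun i => v (Fin.castAdd k i)) (Fin.castLE hk j))

/-- The markers of the combined system. -/
def bigMk (m k : ℕ) (hk : k ≤ m) (η : Fin m → EqMarker) : Fin (m + k) → EqMarker :=
  Fin.addCases (fun _ => EqMarker.mu) (fun j => η (Fin.castLE hk j))

/-- The reduced `k`-equation system, obtained by solving the `y`-equations. -/
def redF (m k : ℕ) (hk : k ≤ m) (f : (Fin m → L) → Fin m → L) (u : Fin m → L → L)
    (p : Fin m → L) : (Fin k → L) → Fin k → L :=
  fun w j =>
    f (fun i => hatU (u i) (if h : (i : ℕ) < k then w ⟨i, h⟩ else p i)) (Fin.castLE hk j)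

/-- The markers of the reduced system. -/
def redMk (m k : ℕ) (hk : k ≤ m) (η : Fin m → EqMarker) : Fin k → EqMarker :=
  fun j => η (Fin.castLE hk j)

/-- Updating the parameter tuple at position `k`. -/
def updP {m : ℕ} (p : Fin m → L) (k : ℕ) (z : L) : Fin m → L :=
  fun i => if (i : ℕ) = k then z else p i

theorem idx1 {m k : ℕ} (i : Fin m) :
    (Fin.castAdd (k + 1) i : Fin (m + (k + 1))) = Fin.castSucc (Fin.castAdd k i) := rfl

theorem idx2 {m k : ℕ} (i : ℕ) (h1 : i < k + 1) (h2 : i < k) :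
    (Fin.natAdd m (⟨i, h1⟩ : Fin (k + 1)) : Fin (m + (k + 1))) =
      Fin.castSucc (Fin.natAdd m ⟨i, h2⟩) := rfl

theorem idx3 {m k : ℕ} (i : ℕ) (h1 : i < k + 1) (h2 : i = k) :
    (Fin.natAdd m (⟨i, h1⟩ : Fin (k + 1)) : Fin (m + (k + 1))) = Fin.last (m + k) := by
  subst h2; rfl

theorem idx4 {m k : ℕ} (j : Fin k) :
    (Fin.natAdd m (Fin.castSucc j) : Fin (m + (k + 1))) = Fin.castSucc (Fin.natAdd m j) := rfl

theorem idx5 {m k : ℕ} (hk1 : k + 1 ≤ m) (j : Fin k) :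
    Fin.castLE hk1 (Fin.castSucc j) = Fin.castLE (Nat.le_of_succ_le hk1) j := rfl

theorem idx6 {m k : ℕ} :
    (Fin.last (m + k) : Fin (m + (k + 1))) = Fin.natAdd m (Fin.last k) := rfl

theorem idx7 {k : ℕ} (i : ℕ) (h1 : i < k + 1) (h2 : i < k) :
    (⟨i, h1⟩ : Fin (k + 1)) = Fin.castSucc ⟨i, h2⟩ := rfl

theorem idx8 {k : ℕ} (i : ℕ) (h1 : i < k + 1) (h2 : i = k) :
    (⟨i, h1⟩ : Fin (k + 1)) = Fin.last k := by
  subst h2; rfl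

theorem snoc_natAdd_last {γ : Type*} {m k : ℕ} (v : Fin (m + k) → γ) (z : γ)
    (i : ℕ) (h1 : i < k + 1) (h2 : i = k) :
    (Fin.snoc v z : Fin (m + (k + 1)) → γ) (Fin.natAdd m ⟨i, h1⟩) = z := by
  subst h2
  exact Fin.snoc_last ..

theorem structural {L : Type*} [CompleteLattice L]
    (m : ℕ) (f : (Fin m → L) → Fin m → L) (u : Fin m → L → L)
    (hu : ∀ i, Monotone (u i)) (η : Fin m → EqMarker) :
    ∀ (k : ℕ) (hk : k ≤ m) (p : Fin m → L),
      (∀ i : Fin m,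
          eqSol (m + k) (bigF m k hk f u p) (bigMk m k hk η) (Fin.castAdd k i) =
            hatU (u i)
              (if h : (i : ℕ) < k then
                eqSol k (redF m k hk f u p) (redMk m k hk η) ⟨i, h⟩ else p i)) ∧
      (∀ j : Fin k,
          eqSol (m + k) (bigF m k hk f u p) (bigMk m k hk η) (Fin.natAdd m j) =
            eqSol k (redF m k hk f u p) (redMk m k hk η) j) := by
  intro k
  induction k with
  | zero =>
    intro hk p
    refine ⟨?_, fun j => j.elim0⟩
    intro i
    have hb : bigF m 0 hk f u p = fun v (i : Fin (m + 0)) => u i (v i) ⊔ p i := by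
      funext v i
      show bigF m 0 hk f u p v (Fin.castAdd 0 i) = _
      simp only [bigF, Fin.addCases_left, sideVal]
      rw [dif_neg (Nat.not_lt_zero _)]
      rfl
    have hm : bigMk m 0 hk η = fun _ => EqMarker.mu := by
      funext i
      show bigMk m 0 hk η (Fin.castAdd 0 i) = _
      simp only [bigMk, Fin.addCases_left]
    rw [dif_neg (Nat.not_lt_zero _)]
    rw [hb, hm]
    exact eqSol_indep m (fun i y => u i y ⊔ p i)
      (fun i a b hab => sup_le_sup_right (hu i hab) _) (fun _ => EqMarker.mu) i
  | succ k IH =>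
    intro hk1 p
    have hk : k ≤ m := Nat.le_of_succ_le hk1
    set B := bigF m (k + 1) hk1 f u p with hB
    set M := bigMk m (k + 1) hk1 η with hM
    -- Claim 1: fixing the last variable of the combined system
    have claim1 : ∀ z : L, subSys (m := m + k) B z = bigF m k hk f u (updP p k z) := by
      intro z
      funext v j
      induction j using Fin.addCases with
      | left i =>
        show B (Fin.snoc v z) (Fin.castSucc (Fin.castAdd k i)) = _
        rw [← idx1]
        simp only [hB, bigF, Fin.addCases_left]
        congr 1
        · rw [idx1, Fin.snoc_castSucc]
        · simp only [sideVal]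
          rcases Nat.lt_trichotomy (i : ℕ) k with h | h | h
          · rw [dif_pos (Nat.lt_succ_of_lt h), dif_pos h,
              idx2 _ (Nat.lt_succ_of_lt h) h, Fin.snoc_castSucc]
          · rw [dif_pos (by omega : (i : ℕ) < k + 1), dif_neg (by omega)]
            exact (snoc_natAdd_last v z _ _ h).trans (by simp [updP, h])
          · rw [dif_neg (by omega), dif_neg (by omega)]
            simp only [updP]
            rw [if_neg (by omega)]
      | right j =>
        show B (Fin.snoc v z) (Fin.castSucc (Fin.natAdd m j)) = _
        rw [← idx4]
        simp only [hB, bigF, Fin.addCases_right]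
        rw [idx5]
        congr 1
        funext i
        rw [idx1, Fin.snoc_castSucc]
    have claim2 : subMk (m := m + k) M = bigMk m k hk η := by
      funext j
      induction j using Fin.addCases with
      | left i =>
        show M (Fin.castSucc (Fin.castAdd k i)) = _
        rw [← idx1]
        simp only [hM, bigMk, Fin.addCases_left]
      | right j =>
        show M (Fin.castSucc (Fin.natAdd m j)) = _
        rw [← idx4]
        simp only [hM, bigMk, Fin.addCases_right]
        rw [idx5]
    -- Claim 3: fixing the last variable of the reduced system
    have claim3 : ∀ z : L,
        subSys (m := k) (redF m (k + 1) hk1 f u p) z = redF m k hk f u (updP p k z) := by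
      intro z
      funext w j
      show redF m (k + 1) hk1 f u p (Fin.snoc w z) (Fin.castSucc j) = _
      simp only [redF]
      rw [idx5]
      congr 1
      funext i
      congr 1
      rcases Nat.lt_trichotomy (i : ℕ) k with h | h | h
      · rw [dif_pos (Nat.lt_succ_of_lt h), dif_pos h,
          idx7 _ (Nat.lt_succ_of_lt h) h, Fin.snoc_castSucc]
      · rw [dif_pos (by omega : (i : ℕ) < k + 1), dif_neg (by omega),
          idx8 _ (by omega) h, Fin.snoc_last]
        simp [updP, h]
      · rw [dif_neg (by omega), dif_neg (by omega)]
        simp only [updP]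
        rw [if_neg (by omega)]
    have claim4 : subMk (m := k) (redMk m (k + 1) hk1 η) = redMk m k hk η := by
      funext j
      show redMk m (k + 1) hk1 η (Fin.castSucc j) = _
      simp only [redMk]
      rw [idx5]
    -- the last functions agree
    have hlastfun : lastFun (m := m + k) B M = lastFun (m := k) (redF m (k + 1) hk1 f u p) (redMk m (k + 1) hk1 η) := by
      funext z
      show B (Fin.snoc (eqSol (m + k) (subSys (m := m + k) B z) (subMk (m := m + k) M)) z)
          (Fin.last (m + k)) =
        redF m (k + 1) hk1 f u p
          (Fin.snoc (eqSol k (subSys (m := k) (redF m (k + 1) hk1 f u p) z)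
            (subMk (m := k) (redMk m (k + 1) hk1 η))) z) (Fin.last k)
      rw [claim1 z, claim2, claim3 z, claim4]
      rw [idx6]
      simp only [hB, bigF, Fin.addCases_right, redF]
      congr 1
      funext i
      rw [idx1, Fin.snoc_castSucc, (IH hk (updP p k z)).1 i]
      congr 1
      rcases Nat.lt_trichotomy (i : ℕ) k with h | h | h
      · rw [dif_pos h, dif_pos (Nat.lt_succ_of_lt h),
          idx7 _ (Nat.lt_succ_of_lt h) h, Fin.snoc_castSucc]
      · rw [dif_neg (by omega), dif_pos (by omega : (i : ℕ) < k + 1),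
          idx8 _ (by omega) h, Fin.snoc_last]
        simp [updP, h]
      · rw [dif_neg (by omega), dif_neg (by omega)]
        simp only [updP]
        rw [if_neg (by omega)]
    have hmkeq : M (Fin.last (m + k)) = redMk m (k + 1) hk1 η (Fin.last k) := by
      show M (Fin.natAdd m (Fin.last k)) = _
      simp only [hM, bigMk, Fin.addCases_right, redMk]
    have hlastsol : lastSol (m := m + k) B M = lastSol (m := k) (redF m (k + 1) hk1 f u p) (redMk m (k + 1) hk1 η) := by
      unfold lastSol
      rw [hlastfun, hmkeq]
    set s := lastSol (m := k) (redF m (k + 1) hk1 f u p) (redMk m (k + 1) hk1 η) with hs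
    have hred : eqSol (k + 1) (redF m (k + 1) hk1 f u p) (redMk m (k + 1) hk1 η) =
        Fin.snoc (eqSol k (redF m k hk f u (updP p k s)) (redMk m k hk η)) s := by
      rw [eqSol_succ, claim3, claim4]
    have hbig : eqSol (m + (k + 1)) B M =
        Fin.snoc (eqSol (m + k) (bigF m k hk f u (updP p k s)) (bigMk m k hk η)) s := by
      have h0 : eqSol (m + (k + 1)) B M =
          Fin.snoc (eqSol (m + k) (subSys (m := m + k) B (lastSol (m := m + k) B M))
            (subMk (m := m + k) M)) (lastSol (m := m + k) B M) :=
        eqSol_succ (m := m + k) B M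
      rw [h0, hlastsol, claim1, claim2]
    constructor
    · intro i
      rw [hbig, idx1, Fin.snoc_castSucc, (IH hk (updP p k s)).1 i, hred]
      congr 1
      rcases Nat.lt_trichotomy (i : ℕ) k with h | h | h
      · rw [dif_pos h, dif_pos (Nat.lt_succ_of_lt h),
          idx7 _ (Nat.lt_succ_of_lt h) h, Fin.snoc_castSucc]
      · rw [dif_neg (by omega), dif_pos (by omega : (i : ℕ) < k + 1),
          idx8 _ (by omega) h, Fin.snoc_last]
        simp [updP, h]
      · rw [dif_neg (by omega), dif_neg (by omega)]
        simp only [updP]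
        rw [if_neg (by omega)]
    · intro j
      rw [hbig, hred]
      induction j using Fin.lastCases with
      | last =>
        have hr : (Fin.snoc (eqSol k (redF m k hk f u (updP p k s)) (redMk m k hk η)) s :
            Fin (k + 1) → L) (Fin.last k) = s := by simp
        exact (snoc_natAdd_last _ _ _ k.lt_succ_self rfl).trans hr.symm
      | cast j' =>
        rw [idx4, Fin.snoc_castSucc, Fin.snoc_castSucc]
        exact (IH hk (updP p k s)).2 j'

end Structural

/-- Preserving solutions with up-to: for a compatible tuple `u` of up-to
functions for `E`, the solution of the `2m`-equation system `Ê^u` is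
`(sol E, sol E)`, i.e. both the `y`-components and the `x`-components equal
the solution of `E`. -/
theorem up_to_system_preserves_solution
    {L : Type*} [CompleteLattice L]
    (m : ℕ) (f : (Fin m → L) → Fin m → L) (hf : Monotone f)
    (η : Fin m → EqMarker)
    (u : Fin m → L → L) (hu : ∀ i, Monotone (u i))
    (hcompat : ∀ (v : Fin m → L) (i : Fin m), u i (f v i) ≤ f (fun j => u j (v j)) i)
    (hμ : ∀ i, η i = EqMarker.mu → DirContinuous (u i) ∧ BotStrict (u i)) :
    (∀ i : Fin m,
        eqSol (m + m) (upToSystemFun m f u) (upToSystemMarkers m η) (Fin.castAdd m i) =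
          eqSol m f η i) ∧
    (∀ i : Fin m,
        eqSol (m + m) (upToSystemFun m f u) (upToSystemMarkers m η) (Fin.natAdd m i) =
          eqSol m f η i) := by
  -- identify the given system with the combined system of the structural lemma
  have hup : upToSystemFun m f u = bigF m m le_rfl f u (fun _ => ⊥) := by
    funext v idx
    induction idx using Fin.addCases with
    | left i =>
      simp only [upToSystemFun, bigF, Fin.addCases_left, sideVal]
      rw [dif_pos i.isLt]
    | right j =>
      simp only [upToSystemFun, bigF, Fin.addCases_right]
      congr 1
  have hmk : upToSystemMarkers m η = bigMk m m le_rfl η := by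
    funext idx
    induction idx using Fin.addCases with
    | left i => simp only [upToSystemMarkers, bigMk, Fin.addCases_left]
    | right j =>
      simp only [upToSystemMarkers, bigMk, Fin.addCases_right]
      congr 1
  -- identify the reduced system with `f` composed with the closures
  have hredf : redF m m le_rfl f u (fun _ => ⊥) =
      fun (w : Fin m → L) => f (fun j => hatU (u j) (w j)) := by
    funext w j
    simp only [redF]
    congr 1
    · funext i
      rw [dif_pos i.isLt]
  have hredmk : redMk m m le_rfl η = η := by
    funext j
    simp only [redMk]
    congr 1
  -- the core lemma for the closures `hatU (u i)`
  obtain ⟨hB1, hB2⟩ := sol_comp_closure m f hf η (fun i => hatU (u i))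
    (fun i => hatU_mono (hu i))
    (fun i x => hatU_ext (hu i) x)
    (fun i x => hatU_idem (hu i) x)
    (by
      intro v i
      refine muFix_le (sup_le ?_ ?_)
      · exact (hcompat (fun j => hatU (u j) (v j)) i).trans
          (hf (fun j => u_hatU_le (hu j) (v j)) i)
      · exact hf (fun j => hatU_ext (hu j) (v j)) i)
    (fun i hi => ⟨hatU_cont (hu i) (hμ i hi).1, hatU_strict (hu i) (hμ i hi).2⟩)
  obtain ⟨h1, h2⟩ := structural m f u hu η m le_rfl (fun _ => ⊥)
  rw [hredf, hredmk] at h1 h2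
  constructor
  · intro i
    rw [hup, hmk, h1 i, dif_pos i.isLt]
    have hEta : (⟨(i : ℕ), i.isLt⟩ : Fin m) = i := Fin.eta i i.isLt
    rw [hEta, hB1 i]
    exact hB2 i
  · intro i
    rw [hup, hmk, h2 i]
    exact hB1 i
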